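/- arXiv:hep-th/0305066 — 5 statements merged into one kernel-verified Lean document; each statement's English description precedes it below -/
import Mathlib

section
/- Let r > 0 be real, q a natural number, and 0 < Λ_R ≤ Λ. Then the improper integral ∫_{Λ}^{∞} x^(-r-1) · (Real.log(x/Λ_R))^q dx converges and equals (q! / r^(q+1)) · Λ^(-r) · ∑_{j=0}^{q} (r · Real.log(Λ/Λ_R))^j / j!. -/
open MeasureTheory Filter Topology Finset Real
open scoped Nat

/-! Write `E_n(t) = ∑_{j<n} t^j/j!`, so that `E_{n+1}' = E_n` and `E_{q+1} - E_q = t^q/q!`. Then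
`G(x) = -(q!/r^(q+1)) x^(-r) E_{q+1}(r log(x/Λ_R))` is an antiderivative of the integrand, and
`G → 0` at infinity because every power of `log x` is `o(x^r)`. The integrand is nonnegative on
`(Λ, ∞)` since `Λ_R ≤ Λ`, so the improper integral converges and equals `-G(Λ)`. -/

noncomputable def expPartialSum (n : ℕ) (t : ℝ) : ℝ := ∑ j ∈ range n, t ^ j / j !

theorem expPartialSum_succ (n : ℕ) (t : ℝ) :
    expPartialSum (n + 1) t = expPartialSum n t + t ^ n / n ! :=
  sum_range_succ _ _

theorem hasDerivAt_expPartialSum_succ (n : ℕ) (t : ℝ) :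
    HasDerivAt (expPartialSum (n + 1)) (expPartialSum n t) t := by
  induction n with
  | zero =>
    have hone : expPartialSum 1 = fun _ => 1 := funext fun s => by simp [expPartialSum]
    simpa [hone, expPartialSum] using hasDerivAt_const t (1 : ℝ)
  | succ n ih =>
    have hpow : HasDerivAt (fun s : ℝ => s ^ (n + 1) / (n + 1)!) (t ^ n / n !) t := by
      refine ((hasDerivAt_pow (n + 1) t).div_const ((n + 1)! : ℝ)).congr_deriv ?_
      rw [Nat.factorial_succ, Nat.add_sub_cancel]
      push_cast
      field_simp
    rw [expPartialSum_succ n t, funext (expPartialSum_succ (n + 1))]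
    exact ih.add hpow

theorem hasDerivAt_log_div_const {a x : ℝ} (ha : a ≠ 0) (hx : x ≠ 0) :
    HasDerivAt (fun y => log (y / a)) x⁻¹ x := by
  convert ((hasDerivAt_id' x).div_const a).log (div_ne_zero hx ha) using 1
  field_simp

theorem hasDerivAt_rpow_neg_mul_expPartialSum_log {r a x : ℝ} (hr : r ≠ 0) (ha : a ≠ 0)
    (hx : x ≠ 0) (q : ℕ) :
    HasDerivAt
      (fun y => -(q ! / r ^ (q + 1)) * (y ^ (-r) * expPartialSum (q + 1) (r * log (y / a))))
      (x ^ (-r - 1) * log (x / a) ^ q) x := by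
  have hpow : HasDerivAt (fun y => y ^ (-r)) (-r * x ^ (-r - 1)) x := by
    simpa using hasDerivAt_rpow_const (p := -r) (Or.inl hx)
  have hexp := (hasDerivAt_expPartialSum_succ q _).comp x
    ((hasDerivAt_log_div_const ha hx).const_mul r)
  refine ((hpow.mul hexp).const_mul _).congr_deriv ?_
  rw [Function.comp_apply, expPartialSum_succ, rpow_sub_one hx]
  field_simp
  ring

theorem tendsto_rpow_neg_mul_log_div_pow_atTop {r a : ℝ} (hr : 0 < r) (ha : 0 < a) (j : ℕ) :
    Tendsto (fun x => x ^ (-r) * log (x / a) ^ j) atTop (𝓝 0) := by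
  have hlog : (fun x => log (x / a) ^ (j : ℝ)) =o[atTop] fun x => (x / a) ^ r :=
    (isLittleO_log_rpow_rpow_atTop j hr).comp_tendsto (tendsto_id.atTop_div_const ha)
  have hscale : (fun x => (x / a) ^ r) =O[atTop] fun x => x ^ r := by
    refine Asymptotics.IsBigO.of_bound (a ^ r)⁻¹ ?_
    filter_upwards [eventually_ge_atTop 0] with x hx
    rw [div_rpow hx ha.le, norm_div, norm_of_nonneg (rpow_nonneg hx r),
      norm_of_nonneg (rpow_nonneg ha.le r), div_eq_inv_mul]
  refine ((hlog.trans_isBigO hscale).tendsto_div_nhds_zero).congr' ?_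
  filter_upwards [eventually_gt_atTop 0] with x hx
  rw [rpow_natCast, rpow_neg hx.le, div_eq_inv_mul]

theorem tendsto_rpow_neg_mul_expPartialSum_log_atTop {r a : ℝ} (hr : 0 < r) (ha : 0 < a)
    (c : ℝ) (n : ℕ) :
    Tendsto (fun x => x ^ (-r) * expPartialSum n (c * log (x / a))) atTop (𝓝 0) := by
  simp only [expPartialSum, mul_sum]
  rw [← sum_const_zero (s := range n)]
  refine tendsto_finsetSum _ fun j _ => ?_
  convert (tendsto_rpow_neg_mul_log_div_pow_atTop hr ha j).const_mul (c ^ j / j !) using 2 <;>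
    ring

/-- Improper scale integral for the irrelevant case: for `r > 0` and `0 < Λ_R ≤ Λ`,
the integral `∫_{Λ}^{∞} x^(-r-1) (log (x/Λ_R))^q dx` converges and equals
`(q!/r^(q+1)) · Λ^(-r) · ∑_{j=0}^q (r log(Λ/Λ_R))^j / j!`. -/
theorem intlog_improper_integral_irrelevant (r : ℝ) (hr : 0 < r) (q : ℕ)
    (ΛR Λ : ℝ) (hΛR : 0 < ΛR) (hΛ : ΛR ≤ Λ) :
    IntegrableOn (fun x : ℝ => x ^ (-r - 1) * (Real.log (x / ΛR)) ^ q) (Set.Ioi Λ) ∧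
    ∫ x in Set.Ioi Λ, x ^ (-r - 1) * (Real.log (x / ΛR)) ^ q =
      ((Nat.factorial q : ℝ) / r ^ (q + 1)) * Λ ^ (-r) *
        ∑ j ∈ Finset.range (q + 1),
          (r * Real.log (Λ / ΛR)) ^ j / (Nat.factorial j) := by
  have hΛ0 : 0 < Λ := hΛR.trans_le hΛ
  have hderiv (x : ℝ) (hx : x ∈ Set.Ioi Λ) :=
    hasDerivAt_rpow_neg_mul_expPartialSum_log hr.ne' hΛR.ne' (hΛ0.trans hx).ne' q
  have hcont : ContinuousWithinAt _ (Set.Ici Λ) Λ :=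
    (hasDerivAt_rpow_neg_mul_expPartialSum_log hr.ne' hΛR.ne' hΛ0.ne' q).continuousAt
      |>.continuousWithinAt
  have hlim := (tendsto_rpow_neg_mul_expPartialSum_log_atTop hr hΛR r (q + 1)).const_mul
    (-(q ! / r ^ (q + 1)))
  rw [mul_zero] at hlim
  have hnonneg (x : ℝ) (hx : x ∈ Set.Ioi Λ) : 0 ≤ x ^ (-r - 1) * log (x / ΛR) ^ q :=
    mul_nonneg (rpow_nonneg (hΛ0.trans hx).le _)
      (pow_nonneg (log_nonneg ((one_le_div hΛR).2 (hΛ.trans hx.out.le))) q)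
  refine ⟨integrableOn_Ioi_deriv_of_nonneg hcont hderiv hnonneg hlim, ?_⟩
  rw [integral_Ioi_of_hasDerivAt_of_nonneg hcont hderiv hnonneg hlim, expPartialSum]
  ring
end

section
/- Let r > 0 be real, q a natural number, 0 < Λ_R ≤ Λ ≤ Λ₀, and let P(y) = ∑_{k=0}^{q} a_k y^k be a polynomial with all a_k ≥ 0. Suppose f : ℝ → ℝ is differentiable on [Λ, Λ₀] and satisfies |x · f'(x)| ≤ x^(-r) · P(Real.log(x/Λ_R)) for all x ∈ [Λ, Λ₀]. Then |f(Λ)| ≤ |f(Λ₀)| + Λ^(-r) · Q(Real.log(Λ/Λ_R)), where Q is the polynomial of degree at most q with nonnegative coefficients given by Q(y) = ∑_{k=0}^{q} a_k · (k! / r^(k+1)) · ∑_{j=0}^{k} (r·y)^j / j!. -/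
/-!
With `Q` as in the statement, `G x = x^(-r) Q(log(x/Λ_R))` satisfies
`G' x = -x^(-r-1) P(log(x/Λ_R))`, since `Q' - r Q = -P` coefficientwise.
The hypothesis says `|f'| ≤ -G'` on `[Λ, Λ₀]`, so `f ± G` are monotone and
`|f Λ₀ - f Λ| ≤ G Λ - G Λ₀ ≤ G Λ`, because `G ≥ 0` above `Λ_R`. Dropping `G Λ₀` is what
makes the estimate uniform in `Λ₀`.
-/

open Real Set Finset Nat

theorem abs_sub_le_sub_of_abs_deriv_le {f f' g g' : ℝ → ℝ} {a b : ℝ} (hab : a ≤ b)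
    (hf : ∀ x ∈ Icc a b, HasDerivWithinAt f (f' x) (Icc a b) x)
    (hg : ∀ x ∈ Icc a b, HasDerivWithinAt g (g' x) (Icc a b) x)
    (hbound : ∀ x ∈ Ioo a b, |f' x| ≤ g' x) :
    |f b - f a| ≤ g b - g a := by
  have hfc : ContinuousOn f (Icc a b) := fun x hx => (hf x hx).continuousWithinAt
  have hgc : ContinuousOn g (Icc a b) := fun x hx => (hg x hx).continuousWithinAt
  have hf' : ∀ x ∈ interior (Icc a b), HasDerivWithinAt f (f' x) (interior (Icc a b)) x :=
    fun x hx => (hf x (interior_subset hx)).mono interior_subset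
  have hg' : ∀ x ∈ interior (Icc a b), HasDerivWithinAt g (g' x) (interior (Icc a b)) x :=
    fun x hx => (hg x (interior_subset hx)).mono interior_subset
  rw [interior_Icc] at hf' hg'
  have hsub : MonotoneOn (fun x => g x - f x) (Icc a b) := by
    refine monotoneOn_of_hasDerivWithinAt_nonneg (f' := fun x => g' x - f' x)
      (convex_Icc a b) (hgc.sub hfc) ?_ ?_ <;> rw [interior_Icc]
    · exact fun x hx => (hg' x hx).sub (hf' x hx)
    · exact fun x hx => by linarith [le_abs_self (f' x), hbound x hx]
  have hadd : MonotoneOn (fun x => g x + f x) (Icc a b) := by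
    refine monotoneOn_of_hasDerivWithinAt_nonneg (f' := fun x => g' x + f' x)
      (convex_Icc a b) (hgc.add hfc) ?_ ?_ <;> rw [interior_Icc]
    · exact fun x hx => (hg' x hx).add (hf' x hx)
    · exact fun x hx => by linarith [neg_abs_le (f' x), hbound x hx]
  have ha : a ∈ Icc a b := left_mem_Icc.2 hab
  have hb : b ∈ Icc a b := right_mem_Icc.2 hab
  rw [abs_sub_le_iff]
  constructor
  · linarith [hsub ha hb hab]
  · linarith [hadd ha hb hab]

theorem hasDerivAt_sum_range_pow_div_factorial (c y : ℝ) (k : ℕ) :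
    HasDerivAt (fun y => ∑ j ∈ range (k + 1), (c * y) ^ j / (j ! : ℝ))
      (c * ∑ j ∈ range k, (c * y) ^ j / (j ! : ℝ)) y := by
  induction k with
  | zero => simpa using hasDerivAt_const y (1 : ℝ)
  | succ k ih =>
    have hterm : HasDerivAt (fun y => (c * y) ^ (k + 1) / ((k + 1) ! : ℝ))
        (c * ((c * y) ^ k / (k ! : ℝ))) y := by
      refine ((((hasDerivAt_id y).const_mul c).pow (k + 1)).div_const _).congr_deriv ?_
      rw [Nat.factorial_succ]
      push_cast
      field_simp
      simp
    simp only [sum_range_succ _ (k + 1), sum_range_succ _ k, mul_add] at ih hterm ⊢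
    exact ih.add hterm

/-- `tailPoly r k y = e^(r y) ∫_y^∞ t^k e^(-r t) dt` for `r > 0`. -/
noncomputable def tailPoly (r : ℝ) (k : ℕ) (y : ℝ) : ℝ :=
  (k ! : ℝ) / r ^ (k + 1) * ∑ j ∈ range (k + 1), (r * y) ^ j / (j ! : ℝ)

theorem tailPoly_nonneg {r y : ℝ} (hr : 0 ≤ r) (hy : 0 ≤ y) (k : ℕ) :
    0 ≤ tailPoly r k y := by
  unfold tailPoly
  have := mul_nonneg hr hy
  positivity

theorem hasDerivAt_tailPoly {r : ℝ} (hr : r ≠ 0) (k : ℕ) (y : ℝ) :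
    HasDerivAt (tailPoly r k) (r * tailPoly r k y - y ^ k) y := by
  refine ((hasDerivAt_sum_range_pow_div_factorial r y k).const_mul _).congr_deriv ?_
  rw [tailPoly, sum_range_succ, mul_pow]
  field_simp
  ring

theorem hasDerivAt_sum_mul_tailPoly {r : ℝ} (hr : r ≠ 0) (s : Finset ℕ) (a : ℕ → ℝ)
    (y : ℝ) :
    HasDerivAt (fun y => ∑ k ∈ s, a k * tailPoly r k y)
      (r * ∑ k ∈ s, a k * tailPoly r k y - ∑ k ∈ s, a k * y ^ k) y := by
  refine (HasDerivAt.fun_sum fun k _ =>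
    (hasDerivAt_tailPoly hr k y).const_mul (a k)).congr_deriv ?_
  rw [mul_sum, ← sum_sub_distrib]
  exact sum_congr rfl fun k _ => by ring

theorem hasDerivAt_rpow_neg_mul_comp_log {H : ℝ → ℝ} {r c x p : ℝ} (hc : c ≠ 0)
    (hx : 0 < x) (hH : HasDerivAt H (r * H (log (x / c)) - p) (log (x / c))) :
    HasDerivAt (fun x => x ^ (-r) * H (log (x / c))) (-(x ^ (-r) / x * p)) x := by
  have hlog : HasDerivAt (fun x => log (x / c)) x⁻¹ x := by
    refine (((hasDerivAt_id' x).div_const c).log (div_ne_zero hx.ne' hc)).congr_deriv ?_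
    field_simp
  refine ((hasDerivAt_rpow_const (Or.inl hx.ne')).mul (hH.comp x hlog)).congr_deriv ?_
  rw [Function.comp_apply, rpow_sub hx, rpow_one]
  field_simp
  ring

/-- Estimate (intdown): for an irrelevant coupling with `|x f'(x)| ≤ x^(-r) P(log(x/Λ_R))`
on `[Λ, Λ₀]`, integrating downward gives
`|f(Λ)| ≤ |f(Λ₀)| + Λ^(-r) Q(log(Λ/Λ_R))` with
`Q(y) = ∑_k a_k (k!/r^(k+1)) ∑_{j≤k} (r y)^j / j!`. -/
theorem irrelevant_downward_estimate (r : ℝ) (hr : 0 < r) (q : ℕ)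
    (ΛR Λ Λ₀ : ℝ) (hΛR : 0 < ΛR) (hΛ : ΛR ≤ Λ) (hΛ₀ : Λ ≤ Λ₀)
    (a : ℕ → ℝ) (ha : ∀ k, 0 ≤ a k)
    (f f' : ℝ → ℝ)
    (hderiv : ∀ x ∈ Set.Icc Λ Λ₀, HasDerivWithinAt f (f' x) (Set.Icc Λ Λ₀) x)
    (hbound : ∀ x ∈ Set.Icc Λ Λ₀,
      |x * f' x| ≤ x ^ (-r) *
        ∑ k ∈ Finset.range (q + 1), a k * (Real.log (x / ΛR)) ^ k) :
    |f Λ| ≤ |f Λ₀| + Λ ^ (-r) *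
      ∑ k ∈ Finset.range (q + 1), a k *
        (((Nat.factorial k : ℝ) / r ^ (k + 1)) *
          ∑ j ∈ Finset.range (k + 1),
            (r * Real.log (Λ / ΛR)) ^ j / (Nat.factorial j)) := by
  set P : ℝ → ℝ := fun x => ∑ k ∈ range (q + 1), a k * log (x / ΛR) ^ k
  set G : ℝ → ℝ := fun x =>
    x ^ (-r) * ∑ k ∈ range (q + 1), a k * tailPoly r k (log (x / ΛR))
  have hpos : ∀ x ∈ Icc Λ Λ₀, 0 < x := fun x hx => hΛR.trans_le (hΛ.trans hx.1)
  have hG : ∀ x ∈ Icc Λ Λ₀,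
      HasDerivWithinAt (fun x => -G x) (x ^ (-r) / x * P x) (Icc Λ Λ₀) x :=
    fun x hx => by simpa only [neg_neg] using (hasDerivAt_rpow_neg_mul_comp_log hΛR.ne' (hpos x hx)
      (hasDerivAt_sum_mul_tailPoly hr.ne' _ a _)).fun_neg.hasDerivWithinAt
  have hf' : ∀ x ∈ Ioo Λ Λ₀, |f' x| ≤ x ^ (-r) / x * P x := fun x hx => by
    have hx₀ := hpos x (Set.Ioo_subset_Icc_self hx)
    have := hbound x (Set.Ioo_subset_Icc_self hx)
    rw [abs_mul, abs_of_pos hx₀, mul_comm, ← le_div_iff₀ hx₀] at this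
    rwa [div_mul_eq_mul_div]
  have hdiff := abs_sub_le_sub_of_abs_deriv_le hΛ₀ hderiv hG hf'
  have hG₀ : 0 ≤ G Λ₀ := mul_nonneg (rpow_nonneg (hΛR.le.trans (hΛ.trans hΛ₀)) _)
    (sum_nonneg fun k _ => mul_nonneg (ha k) (tailPoly_nonneg hr.le
      (log_nonneg ((one_le_div hΛR).2 (hΛ.trans hΛ₀))) k))
  calc |f Λ| ≤ |f Λ₀| + |f Λ₀ - f Λ| := by
        linarith [abs_sub_abs_le_abs_sub (f Λ) (f Λ₀), abs_sub_comm (f Λ) (f Λ₀)]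
    _ ≤ |f Λ₀| + G Λ := by linarith
end

section
/- Let r > 0 be real, q a natural number, and let P be a polynomial of degree at most q with nonnegative coefficients. Then there exists a polynomial Q of degree at most q with nonnegative coefficients, depending only on P, q and r, such that for all reals 0 < Λ_R ≤ Λ ≤ Λ₀ one has Λ₀^(-r) · P(Real.log(Λ₀/Λ_R)) ≤ Λ^(-r) · Q(Real.log(Λ/Λ_R)). -/
/-- Domination lemma behind boundary condition (intdown0): the initial-condition
bound `Λ₀^(-r) P(log(Λ₀/Λ_R))` can be absorbed, uniformly in `Λ₀`, into a bound
of the same form `Λ^(-r) Q(log(Λ/Λ_R))` at the lower scale `Λ`. -/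
theorem irrelevant_boundary_domination (r : ℝ) (hr : 0 < r) (q : ℕ)
    (P : Polynomial ℝ) (hPdeg : P.natDegree ≤ q) (hPpos : ∀ k, 0 ≤ P.coeff k) :
    ∃ Q : Polynomial ℝ, Q.natDegree ≤ q ∧ (∀ k, 0 ≤ Q.coeff k) ∧
      ∀ ΛR Λ Λ₀ : ℝ, 0 < ΛR → ΛR ≤ Λ → Λ ≤ Λ₀ →
        Λ₀ ^ (-r) * P.eval (Real.log (Λ₀ / ΛR)) ≤
          Λ ^ (-r) * Q.eval (Real.log (Λ / ΛR)) := by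
  set A : ℝ := ∑ k ∈ Finset.range (q + 1), P.coeff k with hA
  set B : ℝ := (1 + q / r) ^ q with hB
  have hA0 : 0 ≤ A := Finset.sum_nonneg fun k _ => hPpos k
  have hB0 : 0 ≤ B := by positivity
  refine ⟨Polynomial.C (A * B) * (Polynomial.X + 1) ^ q, ?_, ?_, ?_⟩
  · calc (Polynomial.C (A * B) * (Polynomial.X + 1) ^ q).natDegree
        ≤ ((Polynomial.X + 1 : Polynomial ℝ) ^ q).natDegree :=
          Polynomial.natDegree_C_mul_le _ _
      _ ≤ q := by
          apply le_trans (Polynomial.natDegree_pow_le)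
          have : (Polynomial.X + 1 : Polynomial ℝ).natDegree = 1 := by
            simpa using Polynomial.natDegree_X_add_C (1 : ℝ)
          simp [this]
  · intro k
    rw [Polynomial.coeff_C_mul, Polynomial.coeff_X_add_one_pow]
    positivity
  · intro ΛR Λ Λ₀ hΛR hΛ hΛ₀
    have hΛpos : 0 < Λ := lt_of_lt_of_le hΛR hΛ
    have hΛ₀pos : 0 < Λ₀ := lt_of_lt_of_le hΛpos hΛ₀
    set x := Real.log (Λ / ΛR) with hx
    set t := Real.log (Λ₀ / Λ) with ht
    have hx0 : 0 ≤ x := Real.log_nonneg ((one_le_div hΛR).mpr hΛ)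
    have ht0 : 0 ≤ t := Real.log_nonneg ((one_le_div hΛpos).mpr hΛ₀)
    have hy : Real.log (Λ₀ / ΛR) = x + t := by
      rw [hx, ht, Real.log_div (ne_of_gt hΛpos) (ne_of_gt hΛR),
        Real.log_div (ne_of_gt hΛ₀pos) (ne_of_gt hΛpos),
        Real.log_div (ne_of_gt hΛ₀pos) (ne_of_gt hΛR)]
      ring
    have hrt : 0 ≤ r * t := by positivity
    -- Λ₀^(-r) = Λ^(-r) * exp (-(r*t))
    have hsplit : Λ₀ ^ (-r) = Λ ^ (-r) * Real.exp (-(r * t)) := by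
      rw [Real.rpow_def_of_pos hΛ₀pos, Real.rpow_def_of_pos hΛpos, ← Real.exp_add,
        ht, Real.log_div (ne_of_gt hΛ₀pos) (ne_of_gt hΛpos)]
      ring_nf
    -- P.eval y ≤ A * (1+y)^q for y ≥ 0
    have h1 : ∀ y : ℝ, 0 ≤ y → P.eval y ≤ A * (1 + y) ^ q := by
      intro y hy0
      rw [Polynomial.eval_eq_sum_range' (Nat.lt_succ_of_le hPdeg), hA, Finset.sum_mul]
      apply Finset.sum_le_sum
      intro k hk
      have hk' : k ≤ q := Nat.lt_succ_iff.mp (Finset.mem_range.mp hk)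
      have h1y : y ^ k ≤ (1 + y) ^ k := pow_le_pow_left₀ hy0 (by linarith) k
      have h2y : (1 + y) ^ k ≤ (1 + y) ^ q := pow_le_pow_right₀ (by linarith) hk'
      exact mul_le_mul_of_nonneg_left (h1y.trans h2y) (hPpos k)
    -- (1+t)^q ≤ B * exp (r*t)
    have hq : (1 + t) ^ q ≤ B * Real.exp (r * t) := by
      rcases Nat.eq_zero_or_pos q with hq0 | hqpos
      · subst hq0
        simpa [hB] using Real.one_le_exp hrt
      · have hqne : (q : ℝ) ≠ 0 := Nat.cast_ne_zero.mpr hqpos.ne'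
        have hstep : 1 + t ≤ (1 + q / r) * Real.exp (r * t / q) := by
          have hexp : 1 + r * t / q ≤ Real.exp (r * t / q) := by
            linarith [Real.add_one_le_exp (r * t / q)]
          have hid : (q / r) * (r * t / q) = t := by field_simp
          have hqr : 0 ≤ (q : ℝ) / r := by positivity
          have hrtq : 0 ≤ r * t / q := by positivity
          nlinarith
        calc (1 + t) ^ q ≤ ((1 + q / r) * Real.exp (r * t / q)) ^ q :=
              pow_le_pow_left₀ (by linarith) hstep q
          _ = (1 + q / r) ^ q * Real.exp (r * t / q) ^ q := mul_pow _ _ _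
          _ = B * Real.exp (r * t) := by
              rw [hB, ← Real.exp_nat_mul]
              congr 1
              field_simp
    have hE : 0 < Real.exp (-(r * t)) := Real.exp_pos _
    -- key: exp(-(r*t)) * P.eval (x+t) ≤ A*B*(1+x)^q
    have key : Real.exp (-(r * t)) * P.eval (x + t) ≤ A * B * (1 + x) ^ q := by
      have h2 : (1 + (x + t)) ^ q ≤ (1 + x) ^ q * (1 + t) ^ q := by
        rw [← mul_pow]
        apply pow_le_pow_left₀ (by linarith)
        nlinarith
      have h1' : P.eval (x + t) ≤ A * ((1 + x) ^ q * (1 + t) ^ q) := by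
        calc P.eval (x + t) ≤ A * (1 + (x + t)) ^ q := h1 _ (by linarith)
          _ ≤ A * ((1 + x) ^ q * (1 + t) ^ q) := mul_le_mul_of_nonneg_left h2 hA0
      have h3 : Real.exp (-(r * t)) * (1 + t) ^ q ≤ B := by
        calc Real.exp (-(r * t)) * (1 + t) ^ q
            ≤ Real.exp (-(r * t)) * (B * Real.exp (r * t)) :=
              mul_le_mul_of_nonneg_left hq hE.le
          _ = B * (Real.exp (-(r * t)) * Real.exp (r * t)) := by ring
          _ = B := by rw [← Real.exp_add]; simp
      calc Real.exp (-(r * t)) * P.eval (x + t)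
          ≤ Real.exp (-(r * t)) * (A * ((1 + x) ^ q * (1 + t) ^ q)) :=
            mul_le_mul_of_nonneg_left h1' hE.le
        _ = A * (1 + x) ^ q * (Real.exp (-(r * t)) * (1 + t) ^ q) := by ring
        _ ≤ A * (1 + x) ^ q * B :=
            mul_le_mul_of_nonneg_left h3 (by positivity)
        _ = A * B * (1 + x) ^ q := by ring
    rw [hy, hsplit]
    have hΛr : 0 < Λ ^ (-r) := Real.rpow_pos_of_pos hΛpos _
    calc Λ ^ (-r) * Real.exp (-(r * t)) * P.eval (x + t)
        = Λ ^ (-r) * (Real.exp (-(r * t)) * P.eval (x + t)) := by ring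
      _ ≤ Λ ^ (-r) * (A * B * (1 + x) ^ q) := mul_le_mul_of_nonneg_left key hΛr.le
      _ = Λ ^ (-r) * Polynomial.eval x (Polynomial.C (A * B) * (Polynomial.X + 1) ^ q) := by
          simp only [Polynomial.eval_mul, Polynomial.eval_pow, Polynomial.eval_add,
            Polynomial.eval_X, Polynomial.eval_one, Polynomial.eval_C]
          ring
end

section
/- Let r > 0 be real, q a natural number, Λ_R > 0, and let P be a polynomial of degree at most q with nonnegative coefficients. Then there exists a polynomial Q of degree at most q+1 with nonnegative coefficients, depending only on P, q, r (and not on Λ₀ or f), such that the following holds: for every Λ₀ ≥ Λ_R and every f : ℝ → ℝ differentiable on [Λ_R, Λ₀] satisfying (i) |x · f'(x)| ≤ x^(-r) · P(Real.log(x/Λ_R)) for all x ∈ [Λ_R, Λ₀], and (ii) |f(Λ₀)| ≤ Λ₀^(-r) · P(Real.log(Λ₀/Λ_R)), one has |f(Λ)| ≤ Λ^(-r) · Q(Real.log(Λ/Λ_R)) for all Λ ∈ [Λ_R, Λ₀]. -/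
/-!
Solving `r R - R' = P` by the terminating Neumann series `R = ∑ⱼ r^{-(j+1)} P^{(j)}` gives a
polynomial with nonnegative coefficients, and the barrier `B(x) = x^{-r} R(log(x/Λ_R))` has
`B'(x) = -x^{-r-1} P(log(x/Λ_R))`. The hypothesis on `f'` says `|f'| ≤ -B'`, so
`|f(Λ) - f(Λ₀)| ≤ B(Λ) - B(Λ₀)`. Since `P ≤ r R` on `[0, ∞)`, the initial value is at most
`r B(Λ₀) ≤ r B(Λ)`, and `Q = (1 + r) R` works.
-/

open Polynomial Real Set Finset

namespace Polynomial

theorem eval_nonneg_of_coeff_nonneg {S : Type*} [Semiring S] [PartialOrder S] [IsOrderedRing S]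
    {p : S[X]} (hp : ∀ k, 0 ≤ p.coeff k) {x : S} (hx : 0 ≤ x) : 0 ≤ p.eval x := by
  rw [eval_eq_sum_range]
  exact sum_nonneg fun i _ => mul_nonneg (hp i) (pow_nonneg hx i)

theorem coeff_iterate_derivative_nonneg {S : Type*} [Semiring S] [PartialOrder S]
    [IsOrderedRing S] {p : S[X]} (hp : ∀ k, 0 ≤ p.coeff k) (j k : ℕ) :
    0 ≤ (derivative^[j] p).coeff k := by
  rw [coeff_iterate_derivative]
  exact nsmul_nonneg (hp _) _

/-- `(r - D)⁻¹ P` for `D = derivative`, as a Neumann series that terminates because `D` is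
nilpotent on `P`. -/
noncomputable def derivativeResolvent {K : Type*} [Field K] (r : K) (P : K[X]) : K[X] :=
  ∑ j ∈ range (P.natDegree + 1), r⁻¹ ^ (j + 1) • derivative^[j] P

section derivativeResolvent

variable {K : Type*} [Field K] (r : K) (P : K[X])

theorem natDegree_derivativeResolvent_le : (derivativeResolvent r P).natDegree ≤ P.natDegree :=
  natDegree_sum_le_of_forall_le _ _ fun j _ =>
    (natDegree_smul_le _ _).trans ((natDegree_iterate_derivative P j).trans (Nat.sub_le _ _))

theorem smul_derivativeResolvent_sub_derivative {r : K} (hr : r ≠ 0) :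
    r • derivativeResolvent r P - derivative (derivativeResolvent r P) = P := by
  have telescope : ∀ j, r • (r⁻¹ ^ (j + 1) • derivative^[j] P)
      - derivative (r⁻¹ ^ (j + 1) • derivative^[j] P)
      = r⁻¹ ^ j • derivative^[j] P - r⁻¹ ^ (j + 1) • derivative^[j + 1] P := by
    intro j
    rw [derivative_smul, smul_smul, pow_succ, mul_left_comm, mul_inv_cancel₀ hr, mul_one,
      Function.iterate_succ_apply']
  rw [derivativeResolvent, smul_sum, map_sum, ← sum_sub_distrib,
    sum_congr rfl fun j _ => telescope j, sum_range_sub', pow_zero, one_smul,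
    Function.iterate_zero_apply, iterate_derivative_eq_zero (Nat.lt_succ_self _), smul_zero,
    sub_zero]

end derivativeResolvent

section derivativeResolvent_nonneg

variable {K : Type*} [Field K] [LinearOrder K] [IsStrictOrderedRing K] {r : K} {P : K[X]}

theorem coeff_derivativeResolvent_nonneg (hr : 0 < r) (hP : ∀ k, 0 ≤ P.coeff k) (k : ℕ) :
    0 ≤ (derivativeResolvent r P).coeff k := by
  rw [derivativeResolvent, finsetSum_coeff]
  exact sum_nonneg fun j _ => by
    rw [coeff_smul, smul_eq_mul]
    exact mul_nonneg (by positivity) (coeff_iterate_derivative_nonneg hP j k)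

theorem eval_le_mul_eval_derivativeResolvent (hr : 0 < r) (hP : ∀ k, 0 ≤ P.coeff k) {x : K}
    (hx : 0 ≤ x) : P.eval x ≤ r * (derivativeResolvent r P).eval x := by
  have hR' : 0 ≤ (derivative (derivativeResolvent r P)).eval x :=
    eval_nonneg_of_coeff_nonneg (fun k => by
      rw [coeff_derivative]
      exact mul_nonneg (coeff_derivativeResolvent_nonneg hr hP _) (by positivity)) hx
  conv_lhs => rw [← smul_derivativeResolvent_sub_derivative P hr.ne']
  rw [eval_sub, eval_smul, smul_eq_mul]
  linarith

end derivativeResolvent_nonneg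

end Polynomial

theorem hasDerivAt_rpow_neg_mul_eval_log_div (R : ℝ[X]) (r : ℝ) {c x : ℝ} (hc : c ≠ 0)
    (hx : 0 < x) :
    HasDerivAt (fun y => y ^ (-r) * R.eval (log (y / c)))
      (-(x ^ (-r - 1) * (r • R - derivative R).eval (log (x / c)))) x := by
  have hlog : HasDerivAt (fun y => log (y / c)) x⁻¹ x := by
    refine (((hasDerivAt_id x).div_const c).log (div_ne_zero hx.ne' hc)).congr_deriv ?_
    simp only [id]
    field_simp
  have := (hasDerivAt_rpow_const (p := -r) (Or.inl hx.ne')).mul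
    ((R.hasDerivAt (log (x / c))).comp x hlog)
  refine this.congr_deriv ?_
  simp only [Function.comp_apply]
  rw [eval_sub, eval_smul, smul_eq_mul, rpow_sub_one hx.ne']
  field_simp
  ring

theorem abs_le_rpow_sub_one_mul_of_abs_mul_le {x a b s : ℝ} (hx : 0 < x)
    (h : |x * a| ≤ x ^ s * b) : |a| ≤ x ^ (s - 1) * b := by
  rwa [rpow_sub_one hx.ne', div_mul_eq_mul_div, le_div_iff₀ hx, mul_comm, ← abs_of_pos hx,
    ← abs_mul, abs_of_pos hx]

theorem abs_sub_le_sub_of_abs_deriv_le_neg_deriv {s : Set ℝ} (hs : Convex ℝ s)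
    {f f' g g' : ℝ → ℝ} (hf : ∀ x ∈ s, HasDerivWithinAt f (f' x) s x)
    (hg : ∀ x ∈ s, HasDerivWithinAt g (g' x) s x) (hbound : ∀ x ∈ interior s, |f' x| ≤ -g' x)
    {x y : ℝ} (hx : x ∈ s) (hy : y ∈ s) (hxy : x ≤ y) : |f x - f y| ≤ g x - g y := by
  have hsub : MonotoneOn (fun z => f z - g z) s :=
    monotoneOn_of_hasDerivWithinAt_nonneg hs
      (fun z hz => ((hf z hz).sub (hg z hz)).continuousWithinAt)
      (fun z hz => ((hf z (interior_subset hz)).sub (hg z (interior_subset hz))).mono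
        interior_subset)
      (fun z hz => by linarith [neg_abs_le (f' z), hbound z hz])
  have hadd : AntitoneOn (fun z => f z + g z) s :=
    antitoneOn_of_hasDerivWithinAt_nonpos hs
      (fun z hz => ((hf z hz).add (hg z hz)).continuousWithinAt)
      (fun z hz => ((hf z (interior_subset hz)).add (hg z (interior_subset hz))).mono
        interior_subset)
      (fun z hz => by linarith [le_abs_self (f' z), hbound z hz])
  have h₁ := hsub hx hy hxy
  have h₂ := hadd hx hy hxy
  rw [abs_le]
  constructor <;> simp only at h₁ h₂ <;> linarith

/-- Irrelevant case of Definition/Lemma 1: a coupling with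
`|x f'(x)| ≤ x^(-r) P(log(x/Λ_R))` on `[Λ_R, Λ₀]` and initial value at `Λ₀`
bounded by `Λ₀^(-r) P(log(Λ₀/Λ_R))` satisfies, uniformly in `Λ₀`,
`|f(Λ)| ≤ Λ^(-r) Q(log(Λ/Λ_R))` for some polynomial `Q` of degree `≤ q+1`
with nonnegative coefficients depending only on `P`, `q`, `r`. -/
theorem irrelevant_coupling_estimate (r : ℝ) (hr : 0 < r) (q : ℕ)
    (ΛR : ℝ) (hΛR : 0 < ΛR)
    (P : Polynomial ℝ) (hPdeg : P.natDegree ≤ q) (hPpos : ∀ k, 0 ≤ P.coeff k) :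
    ∃ Q : Polynomial ℝ, Q.natDegree ≤ q + 1 ∧ (∀ k, 0 ≤ Q.coeff k) ∧
      ∀ Λ₀ : ℝ, ΛR ≤ Λ₀ →
      ∀ f f' : ℝ → ℝ,
        (∀ x ∈ Set.Icc ΛR Λ₀, HasDerivWithinAt f (f' x) (Set.Icc ΛR Λ₀) x) →
        (∀ x ∈ Set.Icc ΛR Λ₀,
          |x * f' x| ≤ x ^ (-r) * P.eval (Real.log (x / ΛR))) →
        |f Λ₀| ≤ Λ₀ ^ (-r) * P.eval (Real.log (Λ₀ / ΛR)) →
        ∀ Λ ∈ Set.Icc ΛR Λ₀,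
          |f Λ| ≤ Λ ^ (-r) * Q.eval (Real.log (Λ / ΛR)) := by
  set R := derivativeResolvent r P
  have hRP : r • R - derivative R = P := smul_derivativeResolvent_sub_derivative P hr.ne'
  refine ⟨(1 + r) • R, ?_, fun k => ?_, ?_⟩
  · exact (natDegree_smul_le _ _).trans ((natDegree_derivativeResolvent_le r P).trans (by omega))
  · rw [coeff_smul, smul_eq_mul]
    exact mul_nonneg (by positivity) (coeff_derivativeResolvent_nonneg hr hPpos k)
  intro Λ₀ hΛ₀ f f' hf hf' hfΛ₀ Λ hΛ
  have hpos : ∀ x ∈ Icc ΛR Λ₀, 0 < x := fun x hx => hΛR.trans_le hx.1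
  have hlog : ∀ x ∈ Icc ΛR Λ₀, 0 ≤ log (x / ΛR) := fun x hx =>
    log_nonneg ((one_le_div hΛR).2 hx.1)
  have hΛ₀mem : Λ₀ ∈ Icc ΛR Λ₀ := ⟨hΛ₀, le_rfl⟩
  set B : ℝ → ℝ := fun x => x ^ (-r) * R.eval (log (x / ΛR))
  have hB : ∀ x ∈ Icc ΛR Λ₀, HasDerivWithinAt B (-(x ^ (-r - 1) * P.eval (log (x / ΛR))))
      (Icc ΛR Λ₀) x := fun x hx =>
    hRP ▸ (hasDerivAt_rpow_neg_mul_eval_log_div R r hΛR.ne' (hpos x hx)).hasDerivWithinAt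
  have hcomp : |f Λ - f Λ₀| ≤ B Λ - B Λ₀ :=
    abs_sub_le_sub_of_abs_deriv_le_neg_deriv (convex_Icc ΛR Λ₀) hf hB
      (fun x hx => by
        rw [neg_neg]
        exact abs_le_rpow_sub_one_mul_of_abs_mul_le (hpos x (interior_subset hx))
          (hf' x (interior_subset hx))) hΛ hΛ₀mem hΛ.2
  have hBΛ₀ : 0 ≤ B Λ₀ := mul_nonneg (rpow_nonneg (hpos Λ₀ hΛ₀mem).le _)
    (eval_nonneg_of_coeff_nonneg (coeff_derivativeResolvent_nonneg hr hPpos) (hlog Λ₀ hΛ₀mem))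
  have hinit : |f Λ₀| ≤ r * B Λ₀ := hfΛ₀.trans <| by
    rw [mul_left_comm]
    exact mul_le_mul_of_nonneg_left (eval_le_mul_eval_derivativeResolvent hr hPpos
      (hlog Λ₀ hΛ₀mem)) (rpow_nonneg (hpos Λ₀ hΛ₀mem).le _)
  have hBmono : r * B Λ₀ ≤ r * B Λ :=
    mul_le_mul_of_nonneg_left (by linarith [abs_nonneg (f Λ - f Λ₀)]) hr.le
  calc |f Λ| ≤ (1 + r) * B Λ := by linarith [abs_sub_abs_le_abs_sub (f Λ) (f Λ₀)]
    _ = Λ ^ (-r) * ((1 + r) • R).eval (log (Λ / ΛR)) := by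
      rw [eval_smul, smul_eq_mul]; ring
end

section
/- Let ι be a finite type, a < b reals, and Δ : ℝ → Matrix ι ι ℝ a matrix-valued function with Δ(x)ᵀ = Δ(x) for all x ∈ [a, b]. Fix Λ ∈ [a, b], suppose Δ has derivative D ∈ Matrix ι ι ℝ at Λ, and suppose Δ(x) is invertible for all x in a neighbourhood of Λ as well as at b. Define F(x) := (Δ(x))⁻¹ * Δ(b) and E(x) := Δ(b) * ((Δ(x))⁻¹ − (Δ(b))⁻¹) * Δ(b). Then E(b) = 0 and E has derivative −(F(Λ))ᵀ * D * F(Λ) at Λ. -/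
/-!
`E(x)` is `Δ(b) Δ(x)⁻¹ Δ(b)` minus a constant, so differentiating the inverse gives
`E'(Λ) = -Δ(b) Δ(Λ)⁻¹ D Δ(Λ)⁻¹ Δ(b)`; by the symmetry of `Δ(Λ)` and `Δ(b)`, the left factor
`Δ(b) Δ(Λ)⁻¹` is `F(Λ)ᵀ`.
-/

open Matrix

attribute [local instance] Matrix.normedAddCommGroup Matrix.normedSpace

theorem RingEquiv.map_ringInverse {R S : Type*} [Semiring R] [Semiring S] (e : R ≃+* S)
    (a : R) : e (Ring.inverse a) = Ring.inverse (e a) := by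
  by_cases ha : IsUnit a
  · obtain ⟨u, rfl⟩ := ha
    rw [Ring.inverse_unit]
    exact (Ring.inverse_unit (Units.map (e : R →* S) u)).symm
  · have hea : ¬IsUnit (e a) := fun h => ha (by simpa using h.map e.symm)
    rw [Ring.inverse_non_unit a ha, Ring.inverse_non_unit _ hea, map_zero]

section

variable {𝕜 n : Type*} [RCLike 𝕜] [Fintype n] [DecidableEq n]

/- The sup norm on matrices is not submultiplicative, so the derivative of `Ring.inverse` is
taken in the complete normed algebra of operators on `EuclideanSpace 𝕜 n` and pulled back. -/
theorem HasDerivAt.matrix_inv {f : 𝕜 → Matrix n n 𝕜} {f' : Matrix n n 𝕜} {x : 𝕜}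
    (hf : HasDerivAt f f' x) (hx : IsUnit (f x).det) :
    HasDerivAt (fun t => (f t)⁻¹) (-((f x)⁻¹ * f' * (f x)⁻¹)) x := by
  let φ := (toEuclideanCLM (n := n) (𝕜 := 𝕜)).toRingEquiv
  let e := (toEuclideanCLM (n := n) (𝕜 := 𝕜)).toAlgEquiv.toLinearEquiv.toContinuousLinearEquiv
  have he : ∀ A, e A = φ A := fun _ => rfl
  have he_inv : ∀ A, e A⁻¹ = Ring.inverse (e A) := fun A => by
    rw [he, he, nonsing_inv_eq_ringInverse, φ.map_ringInverse]
  have hinv_eq : (fun t => (f t)⁻¹) = fun t => e.symm (Ring.inverse (e (f t))) := by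
    funext t
    rw [← he_inv, e.symm_apply_apply]
  have hef : HasDerivAt (fun t => e (f t)) (e f') x := e.hasFDerivAt.comp_hasDerivAt x hf
  obtain ⟨u, hu⟩ := ((isUnit_iff_isUnit_det _).2 hx).map φ
  have hu_inv : (↑u⁻¹ : EuclideanSpace 𝕜 n →L[𝕜] EuclideanSpace 𝕜 n) = e (f x)⁻¹ := by
    rw [← Ring.inverse_unit, hu, he_inv, he]
  rw [hinv_eq]
  refine (e.symm.hasFDerivAt.comp_hasDerivAt x
    ((hasFDerivAt_ringInverse u).comp_hasDerivAt_of_eq x hef hu)).congr_deriv ?_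
  rw [hu_inv]
  refine e.injective ((e.apply_symm_apply _).trans ?_)
  simp [he]

theorem HasDerivAt.matrix_const_mul_mul_const {f : 𝕜 → Matrix n n 𝕜} {f' : Matrix n n 𝕜}
    {x : 𝕜} (hf : HasDerivAt f f' x) (A B : Matrix n n 𝕜) :
    HasDerivAt (fun t => A * f t * B) (A * f' * B) x :=
  (LinearMap.mulLeftRight 𝕜 (A, B)).toContinuousLinearMap.hasFDerivAt.comp_hasDerivAt x hf

end

theorem flow_equation_E_general {ι : Type*} [Fintype ι] [DecidableEq ι]
    (a b : ℝ) (hab : a < b) (Δ : ℝ → Matrix ι ι ℝ)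
    (hsym : ∀ x ∈ Set.Icc a b, (Δ x)ᵀ = Δ x)
    (Λ : ℝ) (hΛ : Λ ∈ Set.Icc a b)
    (D : Matrix ι ι ℝ) (hD : HasDerivAt Δ D Λ)
    (hinv : ∀ᶠ x in nhds Λ, IsUnit (Δ x).det) :
    (fun x => Δ b * ((Δ x)⁻¹ - (Δ b)⁻¹) * Δ b) b = 0 ∧
    HasDerivAt (fun x => Δ b * ((Δ x)⁻¹ - (Δ b)⁻¹) * Δ b)
      (-(((Δ Λ)⁻¹ * Δ b)ᵀ * D * ((Δ Λ)⁻¹ * Δ b))) Λ := by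
  refine ⟨by simp, ?_⟩
  have hE := ((hD.matrix_inv hinv.self_of_nhds).sub_const (Δ b)⁻¹).matrix_const_mul_mul_const
    (Δ b) (Δ b)
  refine hE.congr_deriv ?_
  rw [transpose_mul, transpose_nonsing_inv, hsym Λ hΛ, hsym b ⟨hab.le, le_rfl⟩]
  noncomm_ring

/-- Closed-form solution of the flow equation (polE): for symmetric `Δ`, with
`F(x) = (Δ(x))⁻¹ * Δ(b)` and `E(x) = Δ(b) * ((Δ(x))⁻¹ − (Δ(b))⁻¹) * Δ(b)`, one has
`E(b) = 0` and `E'(Λ) = −(F(Λ))ᵀ * D * F(Λ)` whenever `Δ` has derivative `D` at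
`Λ ∈ [a,b]` and `Δ(x)` is invertible near `Λ` and at `b`. -/
theorem flow_equation_E {ι : Type*} [Fintype ι] [DecidableEq ι]
    (a b : ℝ) (hab : a < b) (Δ : ℝ → Matrix ι ι ℝ)
    (hsym : ∀ x ∈ Set.Icc a b, (Δ x)ᵀ = Δ x)
    (Λ : ℝ) (hΛ : Λ ∈ Set.Icc a b)
    (D : Matrix ι ι ℝ) (hD : HasDerivAt Δ D Λ)
    (hinv : ∀ᶠ x in nhds Λ, IsUnit (Δ x).det)
    (hinvb : IsUnit (Δ b).det) :
    (fun x => Δ b * ((Δ x)⁻¹ - (Δ b)⁻¹) * Δ b) b = 0 ∧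
    HasDerivAt (fun x => Δ b * ((Δ x)⁻¹ - (Δ b)⁻¹) * Δ b)
      (-(((Δ Λ)⁻¹ * Δ b)ᵀ * D * ((Δ Λ)⁻¹ * Δ b))) Λ :=
  flow_equation_E_general a b hab Δ hsym Λ hΛ D hD hinv
end
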